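/- The line arrangement in ℙ²(ℂ) defined by (x³ − y³)(x³ − z³)(y³ − z³) = 0 has exactly 12 points lying on three or more of the 9 lines, each such point lies on exactly 3 lines, and the arrangement has no points lying on exactly 2 of the lines. -/

import Mathlib

/-!
The nine lines form three pencils `x = ω^i y`, `x = ω^i z`, `y = ω^i z`, each through a
coordinate point. As `ω` is a primitive cube root of unity, a pencil passes three times through
a point whose two relevant coordinates `a, b` vanish, once if `a³ = b³ ≠ 0`, and not at all
otherwise. So a point on two lines either has two zero coordinates, and lies on the three lines
of one pencil only, or satisfies two and hence all three of the cube equalities with nonzero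
coordinates, i.e. is `(ω^a : ω^b : 1)`, on exactly one line of each pencil. These are the
3 + 9 triple points.
-/

open Complex Real

/-- A primitive cube root of unity. -/
noncomputable def ω3 : ℂ := Complex.exp (2 * π * I / 3)

/-- The nine linear forms `x - ω^i y`, `x - ω^i z`, `y - ω^i z` (for
`i = 0, 1, 2`) cutting out the lines of the arrangement
`(x³-y³)(x³-z³)(y³-z³) = 0`, indexed by `Fin 3 × Fin 3`. -/
noncomputable def lineForm (q : Fin 3 × Fin 3) : (Fin 3 → ℂ) →ₗ[ℂ] ℂ :=
  if q.1 = 0 then LinearMap.proj 0 - ω3 ^ (q.2 : ℕ) • LinearMap.proj 1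
  else if q.1 = 1 then LinearMap.proj 0 - ω3 ^ (q.2 : ℕ) • LinearMap.proj 2
  else LinearMap.proj 1 - ω3 ^ (q.2 : ℕ) • LinearMap.proj 2

/-- The multiplicity of a point of `ℙ²(ℂ)`: the number of lines of the
arrangement passing through it. -/
noncomputable def multAt (p : Projectivization ℂ (Fin 3 → ℂ)) : ℕ :=
  Set.ncard {q : Fin 3 × Fin 3 | lineForm q p.rep = 0}

section Pencil

variable {K : Type*} [Field K] {ζ : K} {n : ℕ} {a b : K}

noncomputable def pencilCount (ζ : K) (n : ℕ) (a b : K) : ℕ :=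
  {i : Fin n | a = ζ ^ (i : ℕ) * b}.ncard

lemma pencilCount_zero_zero (ζ : K) (n : ℕ) : pencilCount ζ n 0 0 = n := by
  simp [pencilCount]

lemma pow_eq_pow_of_pencilCount_ne_zero (hζ : ζ ^ n = 1) (h : pencilCount ζ n a b ≠ 0) :
    a ^ n = b ^ n := by
  obtain ⟨i, rfl⟩ := Set.nonempty_of_ncard_ne_zero h
  rw [mul_pow, ← pow_mul, mul_comm (i : ℕ), pow_mul, hζ, one_pow, one_mul]

lemma pencilCount_eq_zero_of_pow_ne (hζ : ζ ^ n = 1) (h : a ^ n ≠ b ^ n) :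
    pencilCount ζ n a b = 0 :=
  not_not.mp fun h' => h (pow_eq_pow_of_pencilCount_ne_zero hζ h')

namespace IsPrimitiveRoot

lemma pencilCount_le_one (hζ : IsPrimitiveRoot ζ n) (hab : a ≠ 0 ∨ b ≠ 0) :
    pencilCount ζ n a b ≤ 1 := by
  refine (Set.ncard_le_one_iff).mpr fun {i j} hi hj => ?_
  have hb : b ≠ 0 := by rintro rfl; simp_all
  exact Fin.ext (hζ.pow_inj i.isLt j.isLt (mul_right_cancel₀ hb (hi.symm.trans hj)))

lemma exists_eq_pow_mul_of_pow_eq [NeZero n] (hζ : IsPrimitiveRoot ζ n) (hb : b ≠ 0)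
    (h : a ^ n = b ^ n) : ∃ i : Fin n, a = ζ ^ (i : ℕ) * b := by
  obtain ⟨i, hi, hζi⟩ :=
    hζ.eq_pow_of_pow_eq_one (ξ := a / b) (by rw [div_pow, h, div_self (pow_ne_zero n hb)])
  exact ⟨⟨i, hi⟩, by rw [hζi, div_mul_cancel₀ a hb]⟩

lemma pencilCount_eq_one [NeZero n] (hζ : IsPrimitiveRoot ζ n) (hb : b ≠ 0)
    (h : a ^ n = b ^ n) : pencilCount ζ n a b = 1 := by
  obtain ⟨i, hi⟩ := hζ.exists_eq_pow_mul_of_pow_eq hb h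
  exact le_antisymm (hζ.pencilCount_le_one (Or.inr hb)) ((Set.ncard_pos).mpr ⟨i, hi⟩)

end IsPrimitiveRoot

end Pencil

lemma isPrimitiveRoot_ω3 : IsPrimitiveRoot ω3 3 := Complex.isPrimitiveRoot_exp 3 (by norm_num)

lemma ω3_ne_zero : ω3 ≠ 0 := Complex.exp_ne_zero _

noncomputable def multVec (v : Fin 3 → ℂ) : ℕ :=
  {q : Fin 3 × Fin 3 | lineForm q v = 0}.ncard

lemma Set.ncard_setOf_prod {α β : Type*} [Fintype α] [Fintype β] (P : α × β → Prop) :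
    {q | P q}.ncard = ∑ a, {b | P (a, b)}.ncard := by
  classical
  simp only [Set.ncard_eq_toFinset_card', Set.toFinset_ofPred, Finset.card_filter,
    Fintype.sum_prod_type]

lemma multVec_eq_sum (v : Fin 3 → ℂ) :
    multVec v = pencilCount ω3 3 (v 0) (v 1) + pencilCount ω3 3 (v 0) (v 2) +
      pencilCount ω3 3 (v 1) (v 2) := by
  simp [multVec, pencilCount, Set.ncard_setOf_prod, Fin.sum_univ_three, lineForm, sub_eq_zero]

lemma multVec_units_smul (c : ℂˣ) (v : Fin 3 → ℂ) : multVec (c • v) = multVec v := by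
  simp only [multVec, Units.smul_def, map_smul, smul_eq_mul, mul_eq_zero, c.ne_zero, false_or]

lemma multAt_mk (v : Fin 3 → ℂ) (hv : v ≠ 0) :
    multAt (Projectivization.mk ℂ v hv) = multVec v := by
  obtain ⟨c, hc⟩ := Projectivization.exists_smul_eq_mk_rep ℂ v hv
  rw [multAt, ← multVec, ← hc, multVec_units_smul]

noncomputable def triplePoint : Fin 3 ⊕ Fin 3 × Fin 3 → Fin 3 → ℂ
  | .inl k => Pi.single k 1
  | .inr (a, b) => ![ω3 ^ (a : ℕ), ω3 ^ (b : ℕ), 1]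

lemma triplePoint_inr_apply_ne_zero (a b j : Fin 3) : triplePoint (.inr (a, b)) j ≠ 0 := by
  fin_cases j <;> simp [triplePoint, ω3_ne_zero]

lemma triplePoint_ne_zero (t : Fin 3 ⊕ Fin 3 × Fin 3) : triplePoint t ≠ 0 := by
  rcases t with k | ⟨a, b⟩
  · exact Pi.single_ne_zero_iff.mpr one_ne_zero
  · exact fun h => triplePoint_inr_apply_ne_zero a b 0 (congrFun h 0)

lemma multVec_eq_three_of_pow_eq {v : Fin 3 → ℂ} (h2 : v 2 ≠ 0) (h0 : v 0 ^ 3 = v 2 ^ 3)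
    (h1 : v 1 ^ 3 = v 2 ^ 3) : multVec v = 3 := by
  have h1' : v 1 ≠ 0 := fun h => h2 (pow_eq_zero_iff three_ne_zero |>.mp (by rw [← h1, h]; ring))
  rw [multVec_eq_sum, isPrimitiveRoot_ω3.pencilCount_eq_one h1' (h0.trans h1.symm),
    isPrimitiveRoot_ω3.pencilCount_eq_one h2 h0, isPrimitiveRoot_ω3.pencilCount_eq_one h2 h1]

lemma multVec_single (k : Fin 3) : multVec (Pi.single k 1) = 3 := by
  have hω : ω3 ^ 3 = 1 := isPrimitiveRoot_ω3.pow_eq_one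
  fin_cases k <;> simp [multVec_eq_sum, pencilCount_zero_zero,
    pencilCount_eq_zero_of_pow_ne hω]

lemma multVec_triplePoint (t : Fin 3 ⊕ Fin 3 × Fin 3) : multVec (triplePoint t) = 3 := by
  rcases t with k | ⟨a, b⟩
  · exact multVec_single k
  · refine multVec_eq_three_of_pow_eq one_ne_zero ?_ ?_ <;>
      simp [triplePoint, pow_right_comm _ _ 3, isPrimitiveRoot_ω3.pow_eq_one]

lemma exists_smul_triplePoint_eq_of_two_le_multVec {v : Fin 3 → ℂ} (h : 2 ≤ multVec v) :
    ∃ t, ∃ c : ℂ, c • triplePoint t = v := by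
  by_cases h01 : v 0 = 0 ∧ v 1 = 0
  · exact ⟨.inl 2, v 2, by ext l; fin_cases l <;> simp [triplePoint, h01]⟩
  by_cases h02 : v 0 = 0 ∧ v 2 = 0
  · exact ⟨.inl 1, v 1, by ext l; fin_cases l <;> simp [triplePoint, h02]⟩
  by_cases h12 : v 1 = 0 ∧ v 2 = 0
  · exact ⟨.inl 0, v 0, by ext l; fin_cases l <;> simp [triplePoint, h12]⟩
  have hω : ω3 ^ 3 = 1 := isPrimitiveRoot_ω3.pow_eq_one
  have c01 := isPrimitiveRoot_ω3.pencilCount_le_one (not_and_or.mp h01)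
  have c02 := isPrimitiveRoot_ω3.pencilCount_le_one (not_and_or.mp h02)
  have c12 := isPrimitiveRoot_ω3.pencilCount_le_one (not_and_or.mp h12)
  rw [multVec_eq_sum] at h
  obtain ⟨h0, h1⟩ : v 0 ^ 3 = v 2 ^ 3 ∧ v 1 ^ 3 = v 2 ^ 3 := by
    have e01 := pow_eq_pow_of_pencilCount_ne_zero (a := v 0) (b := v 1) hω
    have e02 := pow_eq_pow_of_pencilCount_ne_zero (a := v 0) (b := v 2) hω
    have e12 := pow_eq_pow_of_pencilCount_ne_zero (a := v 1) (b := v 2) hω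
    grind
  have hv2 : v 2 ≠ 0 := fun hv2 =>
    h12 ⟨pow_eq_zero_iff three_ne_zero |>.mp (by rw [h1, hv2]; ring), hv2⟩
  obtain ⟨a, ha⟩ := isPrimitiveRoot_ω3.exists_eq_pow_mul_of_pow_eq hv2 h0
  obtain ⟨b, hb⟩ := isPrimitiveRoot_ω3.exists_eq_pow_mul_of_pow_eq hv2 h1
  exact ⟨.inr (a, b), v 2, by ext l; fin_cases l <;> simp [triplePoint, ha, hb, mul_comm]⟩

noncomputable def triplePointP (t : Fin 3 ⊕ Fin 3 × Fin 3) : Projectivization ℂ (Fin 3 → ℂ) :=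
  Projectivization.mk ℂ (triplePoint t) (triplePoint_ne_zero t)

lemma multAt_triplePointP (t : Fin 3 ⊕ Fin 3 × Fin 3) : multAt (triplePointP t) = 3 := by
  rw [triplePointP, multAt_mk, multVec_triplePoint]

lemma exists_triplePointP_eq_of_two_le_multAt {p : Projectivization ℂ (Fin 3 → ℂ)}
    (h : 2 ≤ multAt p) : ∃ t, triplePointP t = p := by
  obtain ⟨t, c, hc⟩ := exists_smul_triplePoint_eq_of_two_le_multVec h
  refine ⟨t, ?_⟩
  rw [← p.mk_rep, triplePointP, eq_comm, Projectivization.mk_eq_mk_iff']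
  exact ⟨c, hc⟩

lemma multAt_eq_three_of_two_le {p : Projectivization ℂ (Fin 3 → ℂ)} (h : 2 ≤ multAt p) :
    multAt p = 3 := by
  obtain ⟨t, rfl⟩ := exists_triplePointP_eq_of_two_le_multAt h
  exact multAt_triplePointP t

lemma triplePointP_injective : Function.Injective triplePointP := by
  have hne : ∀ k a b, triplePointP (.inl k) ≠ triplePointP (.inr (a, b)) := by
    intro k a b h
    obtain ⟨c, hc⟩ := (Projectivization.mk_eq_mk_iff' ℂ _ _ _ _).mp h.symm
    have hk : k + 1 ≠ k := by fin_cases k <;> decide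
    have := congrFun hc (k + 1)
    rw [Pi.smul_apply, triplePoint, Pi.single_eq_of_ne hk, smul_zero] at this
    exact triplePoint_inr_apply_ne_zero a b _ this.symm
  rintro (k | ⟨a, b⟩) (l | ⟨a', b'⟩) h
  · obtain ⟨c, hc⟩ := (Projectivization.mk_eq_mk_iff' ℂ _ _ _ _).mp h
    have hk := congrFun hc k
    by_contra hkl
    simp_all [triplePoint, Pi.single_apply]
  · exact absurd h (hne k a' b')
  · exact absurd h.symm (hne l a b)
  · obtain ⟨c, hc⟩ := (Projectivization.mk_eq_mk_iff' ℂ _ _ _ _).mp h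
    obtain rfl : c = 1 := by simpa [triplePoint] using congrFun hc 2
    simp only [triplePoint, one_smul, Matrix.vecCons_inj] at hc
    rw [Fin.ext (isPrimitiveRoot_ω3.pow_inj a'.isLt a.isLt hc.1),
      Fin.ext (isPrimitiveRoot_ω3.pow_inj b'.isLt b.isLt hc.2.1)]

/-- The arrangement `(x³-y³)(x³-z³)(y³-z³) = 0` of 9 lines in `ℙ²(ℂ)` has
exactly 12 points of multiplicity `≥ 3`, every such point has multiplicity
exactly 3, and there are no double points. -/
theorem ceva_arrangement_intersection_points :
    Set.ncard {p : Projectivization ℂ (Fin 3 → ℂ) | 3 ≤ multAt p} = 12 ∧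
    (∀ p : Projectivization ℂ (Fin 3 → ℂ), 3 ≤ multAt p → multAt p = 3) ∧
    (∀ p : Projectivization ℂ (Fin 3 → ℂ), multAt p ≠ 2) := by
  have hrange : {p | 3 ≤ multAt p} = Set.range triplePointP := by
    ext p
    refine ⟨fun hp => exists_triplePointP_eq_of_two_le_multAt (Nat.le_of_succ_le hp), ?_⟩
    rintro ⟨t, rfl⟩
    exact (multAt_triplePointP t).ge
  refine ⟨?_, fun p hp => multAt_eq_three_of_two_le (by omega), fun p hp => ?_⟩
  · rw [hrange, Set.ncard_range_of_injective triplePointP_injective]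
    simp
  · have := multAt_eq_three_of_two_le hp.ge
    omega
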